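/- arXiv:1610.09682 — 4 statements merged into one kernel-verified Lean document; each statement's English description precedes it below -/
import Mathlib

section
/- For every smooth vector field X on A* and all smooth one-forms α, β on A*, and every μ ∈ A*, the covariant derivative of h satisfies (∇⁰_X h)(α,β)(μ) = (X(μ))(α(μ)·β(μ)). Consequently h satisfies the Codazzi condition: (∇⁰_{h_#(α)} h)(β,γ)(μ) = (∇⁰_{h_#(β)} h)(α,γ)(μ) for all smooth one-forms α, β, γ and all μ ∈ A*; that is, (A*, ∇⁰, h) is a generalized pseudo-Hessian manifold. (First part of Theorem 'main', Section 7.) -/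
noncomputable section

variable {A : Type*} [NormedAddCommGroup A] [NormedSpace ℝ A]

/-- The transpose `L_a*` of left multiplication `L_a`, applied to `μ ∈ A*`. -/
def Lstar (mul : A →L[ℝ] A →L[ℝ] A) (a : A) (μ : A →L[ℝ] ℝ) : A →L[ℝ] ℝ :=
  μ.comp (mul a)

/-- The canonical symmetric bivector field: `h(α,β)(μ) = μ(α(μ)·β(μ))`. -/
def hBiv (mul : A →L[ℝ] A →L[ℝ] A) (α β : (A →L[ℝ] ℝ) → A) (μ : A →L[ℝ] ℝ) : ℝ :=
  μ (mul (α μ) (β μ))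

/-- The associated map `h_# : α ↦ (μ ↦ L_{α(μ)}*(μ))`. -/
def hSharp (mul : A →L[ℝ] A →L[ℝ] A) (α : (A →L[ℝ] ℝ) → A) (μ : A →L[ℝ] ℝ) :
    A →L[ℝ] ℝ :=
  Lstar mul (α μ) μ

/-- The covariant derivative `(∇⁰_X h)(α,β)(μ)` of `h` along the vector field `X`
with respect to the canonical flat connection `∇⁰` of `A*`. -/
def nablaH (mul : A →L[ℝ] A →L[ℝ] A) (X : (A →L[ℝ] ℝ) → (A →L[ℝ] ℝ))
    (α β : (A →L[ℝ] ℝ) → A) (μ : A →L[ℝ] ℝ) : ℝ :=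
  fderiv ℝ (hBiv mul α β) μ (X μ)
    - μ (mul (fderiv ℝ α μ (X μ)) (β μ))
    - μ (mul (α μ) (fderiv ℝ β μ (X μ)))

lemma fderiv_hBiv (mul : A →L[ℝ] A →L[ℝ] A) (α β : (A →L[ℝ] ℝ) → A) (μ : A →L[ℝ] ℝ)
    (hα : DifferentiableAt ℝ α μ) (hβ : DifferentiableAt ℝ β μ) (v : A →L[ℝ] ℝ) :
    fderiv ℝ (hBiv mul α β) μ v =
      v (mul (α μ) (β μ)) + μ (mul (fderiv ℝ α μ v) (β μ))
        + μ (mul (α μ) (fderiv ℝ β μ v)) := by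
  have hmulα : HasFDerivAt (fun ν => mul (α ν)) (mul.comp (fderiv ℝ α μ)) μ :=
    (mul.hasFDerivAt).comp μ hα.hasFDerivAt
  have hg := hmulα.clm_apply hβ.hasFDerivAt
  have hid : HasFDerivAt (fun ν : A →L[ℝ] ℝ => ν) (ContinuousLinearMap.id ℝ _) μ :=
    hasFDerivAt_id μ
  have htot := hid.clm_apply hg
  unfold hBiv
  rw [htot.fderiv]
  simp [ContinuousLinearMap.add_apply, ContinuousLinearMap.comp_apply,
    ContinuousLinearMap.flip_apply]
  ring

lemma nablaH_eq (mul : A →L[ℝ] A →L[ℝ] A) (X : (A →L[ℝ] ℝ) → (A →L[ℝ] ℝ))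
    (α β : (A →L[ℝ] ℝ) → A) (hα : ContDiff ℝ (⊤ : ℕ∞) α) (hβ : ContDiff ℝ (⊤ : ℕ∞) β)
    (μ : A →L[ℝ] ℝ) : nablaH mul X α β μ = (X μ) (mul (α μ) (β μ)) := by
  unfold nablaH
  rw [fderiv_hBiv mul α β μ (hα.differentiable (by simp) μ) (hβ.differentiable (by simp) μ)]
  ring

lemma hSharp_contDiff (mul : A →L[ℝ] A →L[ℝ] A) (α : (A →L[ℝ] ℝ) → A)
    (hα : ContDiff ℝ (⊤ : ℕ∞) α) : ContDiff ℝ (⊤ : ℕ∞) (hSharp mul α) := by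
  have h1 : ContDiff ℝ (⊤ : ℕ∞) (fun μ : A →L[ℝ] ℝ => mul (α μ)) :=
    mul.contDiff.comp hα
  exact ContDiff.clm_comp contDiff_id h1

theorem stmt0 [FiniteDimensional ℝ A] (mul : A →L[ℝ] A →L[ℝ] A)
    (hcomm : ∀ a b : A, mul a b = mul b a)
    (hassoc : ∀ a b c : A, mul (mul a b) c = mul a (mul b c)) :
    (∀ X : (A →L[ℝ] ℝ) → (A →L[ℝ] ℝ), ContDiff ℝ (⊤ : ℕ∞) X →
      ∀ α β : (A →L[ℝ] ℝ) → A, ContDiff ℝ (⊤ : ℕ∞) α → ContDiff ℝ (⊤ : ℕ∞) β →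
        ∀ μ : A →L[ℝ] ℝ, nablaH mul X α β μ = (X μ) (mul (α μ) (β μ)))
    ∧
    (∀ α β γ : (A →L[ℝ] ℝ) → A, ContDiff ℝ (⊤ : ℕ∞) α → ContDiff ℝ (⊤ : ℕ∞) β →
      ContDiff ℝ (⊤ : ℕ∞) γ → ∀ μ : A →L[ℝ] ℝ,
        nablaH mul (hSharp mul α) β γ μ = nablaH mul (hSharp mul β) α γ μ) := by
  constructor
  · intro X _ α β hα hβ μ
    exact nablaH_eq mul X α β hα hβ μ
  · intro α β γ hα hβ hγ μ
    rw [nablaH_eq mul _ β γ hβ hγ μ, nablaH_eq mul _ α γ hα hγ μ]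
    show μ (mul (α μ) (mul (β μ) (γ μ))) = μ (mul (β μ) (mul (α μ) (γ μ)))
    rw [← hassoc, hcomm (α μ) (β μ), hassoc]

end
end

section
/- For all u, v, w, x ∈ A and all μ ∈ A*: (i) h(du*,dv*)(μ) = μ(u·v); (ii) X_u(μ) = L_u*(μ); (iii) D X_v(μ)(X_u(μ)) = X_{u·v}(μ), i.e. ∇⁰_{X_u} X_v = X_{u·v}; (iv) T(du*,dv*,dw*)(μ) = μ(u·v·w); (v) 𝒟_{du*} dv* is the constant one-form μ ↦ u·v, i.e. equals d(u·v)*; (vi) (𝒟T)(du*,dv*,dw*,dx*)(μ) = −2 μ(u·v·w·x). In particular, (𝒟T)(du*,dv*,dw*,dx*) = 0 for all u,v,w,x ∈ A if and only if every fourfold product u·v·w·x of elements of A vanishes. (Proposition 'formulas' and the criterion of Theorem 'main' for (A*,∇⁰,h) to be a generalized affine special real manifold, Section 7.) -/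
/-!
Statement 2: the formulas of Proposition `formulas` in Section 7, and the
criterion for `(A*, ∇⁰, h)` to be a generalized affine special real manifold:
`𝒟T = 0` iff all fourfold products in `A` vanish.
-/

noncomputable section

variable {A : Type*} [NormedAddCommGroup A] [NormedSpace ℝ A]

/-- The differential `du*` of the linear function `u*`: the constant one-form `μ ↦ u`. -/
def dstar (u : A) : (A →L[ℝ] ℝ) → A := fun _ => u

/-- The vector field `X_u = h_#(du*)`. -/
def Xvf (mul : A →L[ℝ] A →L[ℝ] A) (u : A) : (A →L[ℝ] ℝ) → (A →L[ℝ] ℝ) :=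
  hSharp mul (dstar u)

/-- The tensor `T(α,β,γ) = (∇⁰_{h_#(α)} h)(β,γ)`. -/
def Tten (mul : A →L[ℝ] A →L[ℝ] A) (α β γ : (A →L[ℝ] ℝ) → A) (μ : A →L[ℝ] ℝ) : ℝ :=
  nablaH mul (hSharp mul α) β γ μ

/-- `(𝒟T)(du*,dv*,dw*,dx*)(μ)`, computed using `𝒟_{du*}dv* = d(u·v)*`
(which is assertion (v) of the theorem below). -/
def DTc (mul : A →L[ℝ] A →L[ℝ] A) (u v w x : A) (μ : A →L[ℝ] ℝ) : ℝ :=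
  fderiv ℝ (Tten mul (dstar v) (dstar w) (dstar x)) μ (Xvf mul u μ)
    - Tten mul (dstar (mul u v)) (dstar w) (dstar x) μ
    - Tten mul (dstar v) (dstar (mul u w)) (dstar x) μ
    - Tten mul (dstar v) (dstar w) (dstar (mul u x)) μ


section Aux
variable {A : Type*} [NormedAddCommGroup A] [NormedSpace ℝ A]

lemma fderiv_eval (c : A) (μ : A →L[ℝ] ℝ) :
    fderiv ℝ (fun ν : A →L[ℝ] ℝ => ν c) μ = ContinuousLinearMap.apply ℝ ℝ c :=
  (ContinuousLinearMap.apply ℝ ℝ c).fderiv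

lemma fderiv_dstar (c : A) (μ : A →L[ℝ] ℝ) :
    fderiv ℝ (dstar c) μ = 0 := fderiv_const_apply c

lemma hBiv_dstar (mul : A →L[ℝ] A →L[ℝ] A) (u v : A) :
    hBiv mul (dstar u) (dstar v) = fun μ => μ (mul u v) := rfl

lemma fderiv_Xvf (mul : A →L[ℝ] A →L[ℝ] A) (v : A) (μ : A →L[ℝ] ℝ) :
    fderiv ℝ (Xvf mul v) μ
      = ((ContinuousLinearMap.compL ℝ A A ℝ).flip (mul v)) := by
  have : Xvf mul v = ⇑((ContinuousLinearMap.compL ℝ A A ℝ).flip (mul v)) := rfl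
  rw [this, ContinuousLinearMap.fderiv]

lemma Tten_dstar (mul : A →L[ℝ] A →L[ℝ] A) (v w x : A) :
    Tten mul (dstar v) (dstar w) (dstar x) = fun μ => μ (mul v (mul w x)) := by
  funext μ
  simp only [Tten, nablaH, hBiv_dstar, fderiv_eval, fderiv_dstar,
    ContinuousLinearMap.zero_apply, ContinuousLinearMap.apply_apply]
  simp [hSharp, Lstar, dstar]

lemma DTc_eq (mul : A →L[ℝ] A →L[ℝ] A)
    (hcomm : ∀ a b : A, mul a b = mul b a)
    (hassoc : ∀ a b c : A, mul (mul a b) c = mul a (mul b c))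
    (u v w x : A) (μ : A →L[ℝ] ℝ) :
    DTc mul u v w x μ = -2 * μ (mul (mul (mul u v) w) x) := by
  simp only [DTc, Tten_dstar, fderiv_eval]
  have hX : Xvf mul u μ = μ.comp (mul u) := rfl
  simp only [hX, ContinuousLinearMap.apply_apply, ContinuousLinearMap.comp_apply]
  have e1 : mul u (mul v (mul w x)) = mul (mul (mul u v) w) x := by
    rw [hassoc, hassoc]
  have e2 : mul (mul u v) (mul w x) = mul (mul (mul u v) w) x :=
    (hassoc (mul u v) w x).symm
  have e3 : mul v (mul (mul u w) x) = mul (mul (mul u v) w) x := by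
    rw [hassoc, hassoc, ← hassoc v u, hcomm v u, hassoc]
  have e4 : mul v (mul w (mul u x)) = mul (mul (mul u v) w) x := by
    rw [hassoc, hassoc, ← hassoc w u x, hcomm w u, hassoc, ← hassoc v u,
      hcomm v u, hassoc]
  rw [e1, e2, e3, e4]; ring
end Aux

theorem stmt2 [FiniteDimensional ℝ A] (mul : A →L[ℝ] A →L[ℝ] A)
    (hcomm : ∀ a b : A, mul a b = mul b a)
    (hassoc : ∀ a b c : A, mul (mul a b) c = mul a (mul b c)) :
    -- (i) h(du*,dv*)(μ) = μ(u·v)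
    (∀ (u v : A) (μ : A →L[ℝ] ℝ), hBiv mul (dstar u) (dstar v) μ = μ (mul u v))
    ∧
    -- (ii) X_u(μ) = L_u*(μ)
    (∀ (u : A) (μ : A →L[ℝ] ℝ), Xvf mul u μ = Lstar mul u μ)
    ∧
    -- (iii) ∇⁰_{X_u} X_v = X_{u·v}
    (∀ (u v : A) (μ : A →L[ℝ] ℝ),
      fderiv ℝ (Xvf mul v) μ (Xvf mul u μ) = Xvf mul (mul u v) μ)
    ∧
    -- (iv) T(du*,dv*,dw*)(μ) = μ(u·v·w)
    (∀ (u v w : A) (μ : A →L[ℝ] ℝ),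
      Tten mul (dstar u) (dstar v) (dstar w) μ = μ (mul (mul u v) w))
    ∧
    -- (v) 𝒟_{du*} dv* = d(u·v)*:  for every μ and every tangent vector w' ∈ A*,
    -- the defining pairing of (𝒟_{du*}dv*)(μ) with w' equals w'(u·v)
    (∀ (u v : A) (μ : A →L[ℝ] ℝ) (w' : A →L[ℝ] ℝ),
      nablaH mul (fun _ => w') (dstar u) (dstar v) μ
          + w' (fderiv ℝ (dstar v) μ (hSharp mul (dstar u) μ))
        = w' (mul u v))
    ∧
    -- (vi) (𝒟T)(du*,dv*,dw*,dx*)(μ) = −2 μ(u·v·w·x)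
    (∀ (u v w x : A) (μ : A →L[ℝ] ℝ),
      DTc mul u v w x μ = -2 * μ (mul (mul (mul u v) w) x))
    ∧
    -- 𝒟T vanishes identically iff every fourfold product vanishes
    ((∀ (u v w x : A) (μ : A →L[ℝ] ℝ), DTc mul u v w x μ = 0)
      ↔ (∀ u v w x : A, mul (mul (mul u v) w) x = 0)) := by
  refine ⟨fun u v μ => rfl, fun u μ => rfl, ?_, ?_, ?_, ?_, ?_⟩
  · -- (iii)
    intro u v μ
    rw [fderiv_Xvf]
    ext b
    simp [Xvf, hSharp, Lstar, dstar, hassoc]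
  · -- (iv)
    intro u v w μ
    have := congrFun (Tten_dstar mul u v w) μ
    rw [this, ← hassoc]
  · -- (v)
    intro u v μ w'
    simp only [nablaH, hBiv_dstar, fderiv_eval, fderiv_dstar,
      ContinuousLinearMap.zero_apply, ContinuousLinearMap.apply_apply]
    simp
  · -- (vi)
    exact DTc_eq mul hcomm hassoc
  · -- (vii)
    constructor
    · intro h u v w x
      apply NormedSpace.eq_zero_of_forall_dual_eq_zero ℝ
      intro μ
      have h1 := (DTc_eq mul hcomm hassoc u v w x μ).symm.trans (h u v w x μ)
      have : μ (mul (mul (mul u v) w) x) = 0 := by linarith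
      exact this
    · intro h u v w x μ
      rw [DTc_eq mul hcomm hassoc, h]; simp

end
end

section
/- For all a, b, c ∈ 𝔄: 2⟨(∇_a K)(b), c⟩ = dΩ(a,b,c) + dΩ(a, Kb, Kc) + ⟨N_K(c, Kb), a⟩, where (∇_a K)(b) = ∇_a(Kb) − K(∇_a b). (The key identity in the proof of Proposition 'equi', Section 3.) -/
/-!
Statement 8 (key identity in the proof of Proposition `equi`, Section 3):
`2⟨(∇_a K)(b), c⟩ = dΩ(a,b,c) + dΩ(a,Kb,Kc) + ⟨N_K(c,Kb), a⟩`
in the algebraic model of a pseudo-Riemannian Lie algebroid with a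
skew-symmetric almost para-complex structure `K`.
-/

section

variable {R : Type*} [CommRing R] [Algebra ℝ R]
variable {M : Type*} [AddCommGroup M] [Module R M] [Module ℝ M] [IsScalarTower ℝ R M]

/-- `dΩ(a,b,c)` where `Ω(a,b) = ⟨Ka,b⟩`. -/
def dOmega (ρ : M →ₗ[R] Derivation ℝ R R) (bra : M →ₗ[ℝ] M →ₗ[ℝ] M)
    (g : M →ₗ[R] M →ₗ[R] R) (K : M →ₗ[R] M) (a b c : M) : R :=
  ρ a (g (K b) c) + ρ b (g (K c) a) + ρ c (g (K a) b)
    - g (K (bra a b)) c - g (K (bra b c)) a - g (K (bra c a)) b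

/-- The Nijenhuis torsion `N_K(a,b) = [Ka,Kb] − K[Ka,b] − K[a,Kb] + [a,b]`. -/
def nijK (bra : M →ₗ[ℝ] M →ₗ[ℝ] M) (K : M →ₗ[R] M) (a b : M) : M :=
  bra (K a) (K b) - K (bra (K a) b) - K (bra a (K b)) + bra a b

theorem stmt8
    (ρ : M →ₗ[R] Derivation ℝ R R)
    (bra : M →ₗ[ℝ] M →ₗ[ℝ] M)
    (hskew : ∀ a b : M, bra a b = - bra b a)
    (hleib : ∀ (a b : M) (f : R), bra a (f • b) = f • bra a b + ρ a f • b)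
    (g : M →ₗ[R] M →ₗ[R] R)
    (gsymm : ∀ a b : M, g a b = g b a)
    (nab : M →ₗ[ℝ] M →ₗ[ℝ] M)
    (hnab1 : ∀ (f : R) (a b : M), nab (f • a) b = f • nab a b)
    (hnab2 : ∀ (a : M) (f : R) (b : M), nab a (f • b) = f • nab a b + ρ a f • b)
    (hmetric : ∀ a b c : M, ρ a (g b c) = g (nab a b) c + g b (nab a c))
    (htf : ∀ a b : M, nab a b - nab b a = bra a b)
    (K : M →ₗ[R] M)
    (hK2 : ∀ a : M, K (K a) = a)
    (hKskew : ∀ a b : M, g (K a) b + g a (K b) = 0) :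
    ∀ a b c : M,
      2 * g (nab a (K b) - K (nab a b)) c
        = dOmega ρ bra g K a b c + dOmega ρ bra g K a (K b) (K c)
          + g (nijK bra K c (K b)) a := by
  intro a b c
  have hrel : ∀ x u v : M,
      g (nab x (K u)) v + g (K u) (nab x v) + (g (nab x u) (K v) + g u (nab x (K v))) = 0 := by
    intro x u v
    have h0 := congrArg (ρ x) (hKskew u v)
    rw [map_add, map_zero, hmetric, hmetric] at h0
    linear_combination h0
  have hKK : ∀ u v : M, g (K u) (K v) + g u v = 0 := by
    intro u v
    have := hKskew u (K v)
    rw [hK2] at this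
    linear_combination this
  have h1 := hrel c a b
  have h2 := hrel (K c) a (K b)
  simp only [hK2] at h2
  simp only [dOmega, nijK, ← htf, hK2, map_sub, map_add, LinearMap.sub_apply,
    LinearMap.add_apply, hmetric]
  linear_combination - h1 - h2 - (gsymm (K b) (K (nab (K c) a))) + (gsymm (K b) (K (nab a (K c)))) - (gsymm (K b) (nab c a)) + (gsymm (K c) (K (nab (K b) a))) - (gsymm (K c) (K (nab a (K b)))) + (gsymm (K c) (nab a b)) - (gsymm (K (nab a b)) c) - (gsymm (K (nab a c)) b) - (gsymm (K (nab b a)) c) + (gsymm (K (nab c a)) b) + (gsymm a (nab (K c) b)) + (gsymm a (nab c (K b))) - (gsymm b (nab (K c) a)) - (gsymm c (nab a (K b))) - (hKskew b (nab a c)) + (hKskew b (nab c a)) - (hKskew c (nab a b)) - (hKskew c (nab b a)) + (hKK b (nab (K c) a)) - (hKK b (nab a (K c))) - (hKK c (nab (K b) a)) + (hKK c (nab a (K b)))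

end
end

section
/- Assume in addition that ⟨·,·⟩ is nondegenerate, i.e. ⟨x,c⟩ = 0 for all c ∈ 𝔄 implies x = 0. Then ∇K = 0 (that is, ∇_a(Kb) = K(∇_a b) for all a, b ∈ 𝔄) if and only if dΩ(a,b,c) = 0 for all a,b,c and N_K(a,b) = 0 for all a,b. (Proposition 'equi', Section 3.) -/
/-!
Statement 9 (Proposition `equi`, Section 3): with `⟨·,·⟩` nondegenerate,
`∇K = 0` iff `dΩ = 0` and `N_K = 0`.
-/

section

variable {R : Type*} [CommRing R] [Algebra ℝ R]
variable {M : Type*} [AddCommGroup M] [Module R M] [Module ℝ M] [IsScalarTower ℝ R M]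

theorem stmt9
    (ρ : M →ₗ[R] Derivation ℝ R R)
    (bra : M →ₗ[ℝ] M →ₗ[ℝ] M)
    (hskew : ∀ a b : M, bra a b = - bra b a)
    (hleib : ∀ (a b : M) (f : R), bra a (f • b) = f • bra a b + ρ a f • b)
    (g : M →ₗ[R] M →ₗ[R] R)
    (gsymm : ∀ a b : M, g a b = g b a)
    (gnondeg : ∀ x : M, (∀ c : M, g x c = 0) → x = 0)
    (nab : M →ₗ[ℝ] M →ₗ[ℝ] M)
    (hnab1 : ∀ (f : R) (a b : M), nab (f • a) b = f • nab a b)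
    (hnab2 : ∀ (a : M) (f : R) (b : M), nab a (f • b) = f • nab a b + ρ a f • b)
    (hmetric : ∀ a b c : M, ρ a (g b c) = g (nab a b) c + g b (nab a c))
    (htf : ∀ a b : M, nab a b - nab b a = bra a b)
    (K : M →ₗ[R] M)
    (hK2 : ∀ a : M, K (K a) = a)
    (hKskew : ∀ a b : M, g (K a) b + g a (K b) = 0) :
    (∀ a b : M, nab a (K b) = K (nab a b)) ↔
      ((∀ a b c : M, dOmega ρ bra g K a b c = 0) ∧ (∀ a b : M, nijK bra K a b = 0)) := by
  constructor
  · intro h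
    constructor
    · intro a b c
      unfold dOmega
      rw [← htf a b, ← htf b c, ← htf c a]
      rw [hmetric a (K b) c, hmetric b (K c) a, hmetric c (K a) b]
      simp only [h, map_sub, LinearMap.sub_apply]
      linear_combination hKskew (nab a c) b + hKskew (nab b a) c + hKskew (nab c b) a
        + gsymm (K b) (nab a c) + gsymm (K c) (nab b a) + gsymm (K a) (nab c b)
    · intro a b
      unfold nijK
      rw [← htf (K a) (K b), ← htf (K a) b, ← htf a (K b), ← htf a b]
      simp only [h, map_sub, hK2]
      abel
  · rintro ⟨h1, h2⟩
    -- halving lemma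
    have half : ∀ x : R, x + x = 0 → x = 0 := by
      intro x hx
      have h2x : (2 : ℝ) • x = 0 := by rw [two_smul]; exact hx
      calc x = (1/2 : ℝ) • ((2 : ℝ) • x) := by rw [smul_smul]; norm_num
        _ = 0 := by rw [h2x, smul_zero]
    -- skew-symmetry of A(x,y,z) := g(∇ₓKy, z) - g(K∇ₓy, z) in (y,z)
    have hAs : ∀ x y z : M, g (nab x (K y)) z - g (K (nab x y)) z
        = -(g (nab x (K z)) y - g (K (nab x z)) y) := by
      intro x y z
      have e0 : ρ x (g (K y) z) = - ρ x (g (K z) y) := by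
        have e : g (K y) z = -(g (K z) y) := by
          linear_combination hKskew y z - gsymm y (K z)
        rw [e, map_neg]
      linear_combination (-1) * hmetric x (K y) z + (-1) * hmetric x (K z) y + e0
        - hKskew (nab x z) y - gsymm (K y) (nab x z)
        - hKskew (nab x y) z - gsymm (K z) (nab x y)
    -- moving K between the 2nd and 3rd slots
    have hAK : ∀ x y z : M, g (nab x y) z - g (K (nab x (K y))) z
        = g (nab x (K y)) (K z) - g (K (nab x y)) (K z) := by
      intro x y z
      have e1 : g (nab x (K y)) (K z) = - g (K (nab x (K y))) z := by
        linear_combination hKskew (nab x (K y)) z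
      have e2 : g (K (nab x y)) (K z) = - g (nab x y) z := by
        have t := hKskew (nab x y) (K z)
        rw [hK2] at t
        linear_combination t
      linear_combination (-1) * e1 + e2
    -- dΩ = 0 rewritten as a cyclic identity for A
    have hC : ∀ x y z : M,
        (g (nab x (K y)) z - g (K (nab x y)) z)
        + (g (nab y (K z)) x - g (K (nab y z)) x)
        + (g (nab z (K x)) y - g (K (nab z x)) y) = 0 := by
      intro x y z
      have t := h1 x y z
      unfold dOmega at t
      rw [← htf x y, ← htf y z, ← htf z x] at t
      simp only [map_sub, LinearMap.sub_apply] at t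
      linear_combination t - hmetric x (K y) z - hmetric y (K z) x - hmetric z (K x) y
        - hKskew (nab x z) y - gsymm (K y) (nab x z)
        - hKskew (nab y x) z - gsymm (K z) (nab y x)
        - hKskew (nab z y) x - gsymm (K x) (nab z y)
    -- N_K = 0 rewritten as an identity for A
    have hD : ∀ x y z : M,
        (g (nab (K x) (K y)) z - g (K (nab (K x) y)) z)
        - (g (nab (K y) (K x)) z - g (K (nab (K y) x)) z)
        - (g (nab y (K x)) (K z) - g (K (nab y x)) (K z))
        + (g (nab x (K y)) (K z) - g (K (nab x y)) (K z)) = 0 := by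
      intro x y z
      have t : g (nijK bra K x y) z = 0 := by rw [h2 x y]; simp
      unfold nijK at t
      rw [← htf (K x) (K y), ← htf (K x) y, ← htf x (K y), ← htf x y] at t
      simp only [map_sub, map_add, LinearMap.sub_apply, LinearMap.add_apply, hK2] at t
      have f3 := hKskew (nab y x) (K z)
      rw [hK2] at f3
      have f4 := hKskew (nab x y) (K z)
      rw [hK2] at f4
      linear_combination t + hKskew (nab x (K y)) z - hKskew (nab y (K x)) z + f3 - f4
    intro a b
    have hz : ∀ c : M, g (nab a (K b) - K (nab a b)) c = 0 := by
      intro c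
      simp only [map_sub, LinearMap.sub_apply]
      apply half
      have F0 := hAK a b (K c)
      simp only [hK2] at F0
      have F1 := hD a (K b) c
      simp only [hK2] at F1
      have F2 := hAs a (K b) (K c)
      simp only [hK2] at F2
      have F3 := hD a c (K b)
      simp only [hK2] at F3
      have F4 := hD a (K c) b
      simp only [hK2] at F4
      have F5 := hAs (K a) b (K c)
      simp only [hK2] at F5
      have F6 := hC (K a) b (K c)
      simp only [hK2] at F6
      have F7 := hC (K a) (K b) c
      simp only [hK2] at F7
      have F8 := hD (K a) c b
      simp only [hK2] at F8
      have F9 := hAs b a c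
      have F10 := hAK b a (K c)
      simp only [hK2] at F10
      have F11 := hAs b (K a) (K c)
      simp only [hK2] at F11
      have F12 := hD b c (K a)
      simp only [hK2] at F12
      have F13 := hD b (K c) a
      simp only [hK2] at F13
      have F14 := hAs (K b) a (K c)
      simp only [hK2] at F14
      linear_combination (-2) * F0 + (1) * F1 + (1) * F2 + (1) * F3 + (-1) * F4
        + (1) * F5 + (-1) * F6 + (-1) * F7 + (-1) * F8 + (-1) * F9 + (-2) * F10
        + (2) * F11 + (1) * F12 + (-1) * F13 + (1) * F14
    have := gnondeg _ hz
    exact sub_eq_zero.mp this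

end
end
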